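/- Let T be a P_4-induced-saturated trigraph on vertex set V and let S ⊆ V be such that no edge between S and V − S is gray and every pair of vertices of S has the same neighborhood in V − S (i.e., for all s, s' ∈ S and all w ∈ V − S, the edges sw and s'w have the same color). Then the induced subtrigraph T[S] is P_4-induced-saturated. -/

import Mathlib

open SimpleGraph

/-- A trigraph: the pairs of distinct vertices are partitioned into black edges,
gray edges, and (implicitly) white edges. -/
structure Trigraph (V : Type*) where
  /-- the graph of black edges -/
  black : SimpleGraph V
  /-- the graph of gray edges -/
  gray : SimpleGraph V
  /-- no pair is simultaneously black and gray -/
  disjoint : ∀ u v : V, ¬ (black.Adj u v ∧ gray.Adj u v)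

namespace Trigraph

variable {V : Type*} {W : Type*}

/-- `u v` is a white edge of `T`: the vertices are distinct and joined by neither a
black edge nor a gray edge. -/
def White (T : Trigraph V) (u v : V) : Prop :=
  u ≠ v ∧ ¬ T.black.Adj u v ∧ ¬ T.gray.Adj u v

/-- A realization of a trigraph is a graph containing every black edge and contained
in the union of the black and gray edges. -/
def IsRealization (T : Trigraph V) (R : SimpleGraph V) : Prop :=
  T.black ≤ R ∧ R ≤ T.black ⊔ T.gray

/-- The graph with the single edge `uv` (empty if `u = v`). -/
def single (u v : V) : SimpleGraph V := SimpleGraph.fromEdgeSet {s(u, v)}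

/-- The trigraph obtained from `T` by recoloring the pair `uv` gray. -/
def flip (T : Trigraph V) (u v : V) : Trigraph V where
  black := T.black \ single u v
  gray := T.gray ⊔ single u v
  disjoint := by
    intro a b h
    have := T.disjoint a b
    simp only [SimpleGraph.sdiff_adj, SimpleGraph.sup_adj] at h
    tauto

/-- `G` contains an induced copy of `H`. -/
def HasInducedCopy (H : SimpleGraph W) (G : SimpleGraph V) : Prop :=
  Nonempty (H ↪g G)

/-- A trigraph `T` is `H`-induced-saturated if no realization of `T` contains an
induced copy of `H`, but whenever any black or white edge of `T` is recolored gray,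
some realization of the resulting trigraph contains an induced copy of `H`. -/
def IsIndSat (H : SimpleGraph W) (T : Trigraph V) : Prop :=
  (∀ R : SimpleGraph V, T.IsRealization R → ¬ HasInducedCopy H R) ∧
  (∀ u v : V, u ≠ v → ¬ T.gray.Adj u v →
    ∃ R : SimpleGraph V, (T.flip u v).IsRealization R ∧ HasInducedCopy H R)

/-- The induced saturation number: the least number of gray edges in an
`H`-induced-saturated trigraph on `n` vertices (`⊤` if none exists). -/
noncomputable def indsat (n : ℕ) (H : SimpleGraph W) : ℕ∞ :=
  sInf {k : ℕ∞ | ∃ T : Trigraph (Fin n), IsIndSat H T ∧ (T.gray.edgeSet.ncard : ℕ∞) = k}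

/-- `G` contains a (not necessarily induced) copy of `H` as a subgraph. -/
def HasSubCopy (H : SimpleGraph W) (G : SimpleGraph V) : Prop :=
  ∃ f : W → V, Function.Injective f ∧ ∀ a b : W, H.Adj a b → G.Adj (f a) (f b)

/-- A graph `G` is `H`-saturated if it contains no copy of `H` but adding any new
edge creates a copy of `H`. -/
def IsSat (H : SimpleGraph W) (G : SimpleGraph V) : Prop :=
  ¬ HasSubCopy H G ∧
  ∀ u v : V, u ≠ v → ¬ G.Adj u v → HasSubCopy H (G ⊔ single u v)

/-- The saturation number: the least number of edges of an `H`-saturated graph on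
`n` vertices (`⊤` if none exists). -/
noncomputable def satNum (n : ℕ) (H : SimpleGraph W) : ℕ∞ :=
  sInf {k : ℕ∞ | ∃ G : SimpleGraph (Fin n), IsSat H G ∧ (G.edgeSet.ncard : ℕ∞) = k}

/-- The subtrigraph induced on a set of vertices. -/
def induce (s : Set V) (T : Trigraph V) : Trigraph s where
  black := T.black.induce s
  gray := T.gray.induce s
  disjoint := by
    intro a b h
    exact T.disjoint a b (by simpa using h)

/-- The complement trigraph: black and white edges are exchanged, gray edges are
unchanged. -/
def compl (T : Trigraph V) : Trigraph V where
  black := (T.black ⊔ T.gray)ᶜ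
  gray := T.gray
  disjoint := by
    intro a b h
    rcases h with ⟨hb, hg⟩
    rw [SimpleGraph.compl_adj] at hb
    exact hb.2 ((SimpleGraph.sup_adj _ _ _ _).mpr (Or.inr hg))

end Trigraph

/-!
A realization of `T[S]` extends to a realization of `T` by the black edges outside `S`, so no
realization of `T[S]` contains an induced `P₄`.

For the saturation part, let `uv` be a non-gray pair in `S`. Recoloring it gray in `T` produces
a realization `R` with an induced `P₄`, and that copy uses both `u` and `v`: otherwise giving
`uv` back its color in `T` leaves the copy intact in a realization of `T`. Since every edge
leaving `S` is black or white, `R` agrees with the black graph there, so `S` is still a module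
(homogeneous set) of `R`. Its trace on the copy is then a module of `P₄` with at least two
vertices, and `P₄` is prime, so the whole copy lies in `S` and `R[S]` is the required
realization of `T[S]` with `uv` recolored gray.
-/

open SimpleGraph

namespace SimpleGraph

variable {V W : Type*} {G : SimpleGraph V} {H : SimpleGraph W}

def IsModule (G : SimpleGraph V) (M : Set V) : Prop :=
  ∀ x ∈ M, ∀ y ∈ M, ∀ w ∉ M, G.Adj x w ↔ G.Adj y w

theorem IsModule.preimage {M : Set V} (hM : G.IsModule M) (f : H ↪g G) :
    H.IsModule (f ⁻¹' M) := fun x hx y hy w hw => by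
  simpa only [f.map_rel_iff] using hM (f x) hx (f y) hy (f w) hw

theorem eq_univ_of_isModule_pathGraph_four {M : Set (Fin 4)} (hM : (pathGraph 4).IsModule M)
    {a b : Fin 4} (ha : a ∈ M) (hb : b ∈ M) (hab : a ≠ b) : M = Set.univ := by
  classical
  -- `pathGraph_adj` unfolded, so that `decide` can run through the subsets of `Fin 4`
  have prime : ∀ N : Finset (Fin 4), ∀ a ∈ N, ∀ b ∈ N, a ≠ b →
      (∀ x ∈ N, ∀ y ∈ N, ∀ w ∉ N,
        (x.val + 1 = w.val ∨ w.val + 1 = x.val) ↔ (y.val + 1 = w.val ∨ w.val + 1 = y.val)) →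
      N = Finset.univ := by
    decide
  simpa using prime M.toFinset a (by simpa) b (by simpa) hab
    (by simpa [IsModule, pathGraph_adj] using hM)

def Embedding.codRestrict (f : H ↪g G) {s : Set V} (hf : ∀ a, f a ∈ s) : H ↪g G.induce s where
  toFun a := ⟨f a, hf a⟩
  inj' _ _ h := f.injective (congrArg Subtype.val h)
  map_rel_iff' := f.map_rel_iff

end SimpleGraph

namespace Trigraph

variable {V W : Type*} {T : Trigraph V} {R : SimpleGraph V} {H : SimpleGraph W}

theorem single_adj {u v x y : V} :
    (single u v).Adj x y ↔ ((x = u ∧ y = v) ∨ (x = v ∧ y = u)) ∧ x ≠ y := by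
  simp only [single, fromEdgeSet_adj, Set.mem_singleton_iff, Sym2.eq_iff]

theorem IsRealization.adj_iff_black (hR : T.IsRealization R) {x y : V} (h : ¬ T.gray.Adj x y) :
    R.Adj x y ↔ T.black.Adj x y :=
  ⟨fun hxy => (hR.2 hxy).resolve_right h, fun hxy => hR.1 hxy⟩

theorem IsRealization.induce (hR : T.IsRealization R) (s : Set V) :
    (T.induce s).IsRealization (R.induce s) :=
  ⟨fun _ _ h => hR.1 h, fun _ _ h => hR.2 h⟩

theorem induce_flip (s : Set V) (u v : s) : (T.induce s).flip u v = (T.flip u v).induce s := by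
  have hsingle : single u v = (single (u : V) v).induce s := by
    ext x y
    simp only [comap_adj, Function.Embedding.subtype_apply, single_adj, ne_eq, Subtype.ext_iff]
  simp only [flip, induce, hsingle, mk.injEq]
  constructor <;> ext <;> rfl

open Classical in
noncomputable def extend (T : Trigraph V) (s : Set V) (R' : SimpleGraph s) : SimpleGraph V where
  Adj x y := if h : x ∈ s ∧ y ∈ s then R'.Adj ⟨x, h.1⟩ ⟨y, h.2⟩ else T.black.Adj x y
  symm := ⟨fun x y h => by
    by_cases hs : x ∈ s ∧ y ∈ s
    · rw [dif_pos hs] at h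
      rw [dif_pos hs.symm]
      exact h.symm
    · rw [dif_neg hs] at h
      rw [dif_neg (hs ∘ And.symm)]
      exact h.symm⟩
  loopless := ⟨fun x h => by
    split_ifs at h
    exacts [R'.loopless.irrefl _ h, T.black.loopless.irrefl _ h]⟩

theorem IsRealization.exists_extension {s : Set V} {R' : SimpleGraph s}
    (hR' : (T.induce s).IsRealization R') : ∃ R, T.IsRealization R ∧ Nonempty (R' ↪g R) := by
  refine ⟨T.extend s R', ⟨fun x y h => ?_, fun x y h => ?_⟩, ⟨?_⟩⟩
  · simp only [extend]
    split_ifs with hs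
    exacts [hR'.1 h, h]
  · simp only [extend] at h
    split_ifs at h with hs
    exacts [hR'.2 h, Or.inl h]
  · exact
      { toFun := Subtype.val
        inj' := Subtype.val_injective
        map_rel_iff' := by simp [extend] }

theorem not_hasInducedCopy_of_isRealization_induce
    (hT : ∀ R, T.IsRealization R → ¬ HasInducedCopy H R) {s : Set V} {R' : SimpleGraph s}
    (hR' : (T.induce s).IsRealization R') : ¬ HasInducedCopy H R' := fun ⟨f⟩ => by
  obtain ⟨R, hR, ⟨e⟩⟩ := hR'.exists_extension
  exact hT R hR ⟨e.comp f⟩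

theorem IsRealization.unflip {u v : V} (hR : (T.flip u v).IsRealization R) :
    T.IsRealization (R \ single u v ⊔ T.black ⊓ single u v) := by
  refine ⟨fun x y h => ?_, fun x y h => ?_⟩
  · by_cases huv : (single u v).Adj x y
    · exact Or.inr ⟨h, huv⟩
    · exact Or.inl ⟨hR.1 ⟨h, huv⟩, huv⟩
  · rcases h with ⟨h, huv⟩ | ⟨h, -⟩
    · rcases hR.2 h with ⟨hb, -⟩ | hg | hs
      exacts [Or.inl hb, Or.inr hg, absurd hs huv]
    · exact Or.inl h

theorem mem_range_of_isRealization_flip (hT : ∀ R, T.IsRealization R → ¬ HasInducedCopy H R)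
    {u v : V} (hR : (T.flip u v).IsRealization R) (f : H ↪g R) {z : V} (hz : z = u ∨ z = v) :
    z ∈ Set.range f := by
  by_contra hzf
  have hfree : ∀ a b, ¬ (single u v).Adj (f a) (f b) := by
    simp only [single_adj]
    rintro a b ⟨(⟨ha, hb⟩ | ⟨ha, hb⟩), -⟩ <;> rcases hz with rfl | rfl
    exacts [hzf ⟨a, ha⟩, hzf ⟨b, hb⟩, hzf ⟨b, hb⟩, hzf ⟨a, ha⟩]
  refine hT _ hR.unflip ⟨{ toEmbedding := f.toEmbedding, map_rel_iff' := fun {a b} => ?_ }⟩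
  simp [hfree a b, f.map_rel_iff]

theorem IsRealization.isModule_of_flip {S : Set V} (hgray : ∀ x ∈ S, ∀ w ∉ S, ¬ T.gray.Adj x w)
    (hblack : T.black.IsModule S) {u v : V} (hu : u ∈ S) (hv : v ∈ S)
    (hR : (T.flip u v).IsRealization R) : R.IsModule S := by
  have hcross : ∀ x ∈ S, ∀ w ∉ S, R.Adj x w ↔ T.black.Adj x w := by
    intro x hx w hw
    have hfree : ¬ (single u v).Adj x w := by
      rw [single_adj]
      rintro ⟨(⟨-, rfl⟩ | ⟨-, rfl⟩), -⟩
      exacts [hw hv, hw hu]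
    rw [hR.adj_iff_black fun h => h.elim (hgray x hx w hw) hfree]
    exact and_iff_left hfree
  intro x hx y hy w hw
  rw [hcross x hx w hw, hcross y hy w hw]
  exact hblack x hx y hy w hw

end Trigraph

open Trigraph in
/-- If `S` is a set of vertices of a `P_4`-induced-saturated trigraph
`T` such that no edge between `S` and its complement is gray and any two vertices
of `S` have the same neighborhood outside `S` (the corresponding edges have the
same color), then `T[S]` is `P_4`-induced-saturated. -/
theorem isIndSat_induce_of_sameNeighborhood {V : Type*} (T : Trigraph V)
    (hT : Trigraph.IsIndSat (SimpleGraph.pathGraph 4) T)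
    (S : Set V)
    (hgray : ∀ u ∈ S, ∀ w ∉ S, ¬ T.gray.Adj u w)
    (hsame : ∀ s ∈ S, ∀ s' ∈ S, ∀ w ∉ S,
      (T.black.Adj s w ↔ T.black.Adj s' w) ∧ (T.gray.Adj s w ↔ T.gray.Adj s' w)) :
    Trigraph.IsIndSat (SimpleGraph.pathGraph 4) (T.induce S) := by
  refine ⟨fun R' hR' => not_hasInducedCopy_of_isRealization_induce hT.1 hR', fun u v huv hg => ?_⟩
  obtain ⟨R, hR, ⟨f⟩⟩ := hT.2 u v (Subtype.coe_injective.ne huv) hg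
  obtain ⟨a, ha⟩ := mem_range_of_isRealization_flip hT.1 hR f (Or.inl rfl)
  obtain ⟨b, hb⟩ := mem_range_of_isRealization_flip hT.1 hR f (Or.inr rfl)
  have hmodule : R.IsModule S :=
    hR.isModule_of_flip hgray (fun s hs s' hs' w hw => (hsame s hs s' hs' w hw).1) u.2 v.2
  have hcopy : f ⁻¹' S = Set.univ :=
    eq_univ_of_isModule_pathGraph_four (hmodule.preimage f) (a := a) (b := b)
      (by simp [ha]) (by simp [hb]) (by rintro rfl; exact huv (Subtype.ext (ha.symm.trans hb)))
  exact ⟨R.induce S, induce_flip S u v ▸ hR.induce S,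
    ⟨f.codRestrict (Set.eq_univ_iff_forall.mp hcopy)⟩⟩
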